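/- arXiv:1812.01451 — 3 statements merged into one kernel-verified Lean document; each statement's English description precedes it below -/
import Mathlib

section
/- Let h, g ∈ ℝ³ and set v = h + g/2, w = h − g/2. Then for all multi-indices α, κ ∈ ℕ³, H^α(v) H^κ(w) = Σ_{α'+κ' = α+κ} a_{α'κ'}^{ακ} H^{α'}(√2 h) H^{κ'}(g/√2), where the sum is over all pairs of multi-indices α', κ' ∈ ℕ³ with α' + κ' = α + κ (componentwise), and a_{α'κ'}^{ακ} = ∏_{i=1}^3 a_{α'_i κ'_i}^{α_i κ_i}. -/
open MeasureTheory Real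
open scoped BigOperators Classical

noncomputable section

/-- Velocity space ℝ³. -/
abbrev V3 := Fin 3 → ℝ

/-- Euclidean norm |v| on ℝ³. -/
def nrm (v : V3) : ℝ := Real.sqrt (∑ i, v i ^ 2)

/-- The (normalized) Maxwellian M(v) = (2π)^{-3/2} exp(-|v|²/2). -/
def Mxw (v : V3) : ℝ := (2 * π) ^ (-(3 : ℝ) / 2) * Real.exp (-(∑ i, v i ^ 2) / 2)

/-- |α| = α₁ + α₂ + α₃ for a multi-index. -/
def degIdx (α : Fin 3 → ℕ) : ℕ := α 0 + α 1 + α 2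

/-- α! = α₁! α₂! α₃! for a multi-index. -/
def multiFact (α : Fin 3 → ℕ) : ℕ := (α 0).factorial * (α 1).factorial * (α 2).factorial

/-- Multidimensional Hermite polynomial
`H^α(v) = ((-1)^{|α|}/M(v)) ∂^{|α|} M(v) / ∂v₁^{α₁} ∂v₂^{α₂} ∂v₃^{α₃}`. -/
def Herm (α : Fin 3 → ℕ) (v : V3) : ℝ :=
  ((-1 : ℝ) ^ degIdx α / Mxw v) *
    iteratedDeriv (α 0) (fun x1 =>
      iteratedDeriv (α 1) (fun x2 =>
        iteratedDeriv (α 2) (fun x3 => Mxw ![x1, x2, x3]) (v 2)) (v 1)) (v 0)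

/-- Partial derivative ∂f/∂vᵢ. -/
def pd (i : Fin 3) (f : V3 → ℝ) (v : V3) : ℝ := fderiv ℝ f v (Pi.single i 1)

/-- Divergence of a vector field on ℝ³. -/
def div3 (F : V3 → V3) (v : V3) : ℝ := ∑ i, pd i (fun w => F w i) v

/-- Collision kernel matrix A(v) = Λ|v|^{γ+2} Π(v), Π_{ij}(v) = δ_{ij} - vᵢvⱼ/|v|². -/
def Aker (Λ γ : ℝ) (v : V3) (i j : Fin 3) : ℝ :=
  Λ * nrm v ^ (γ + 2) * ((if i = j then (1 : ℝ) else 0) - v i * v j / nrm v ^ 2)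

/-- Fokker-Planck-Landau collision operator
`Q[f](v) = ∇_v · ∫ A(v-v*) (f(v*)∇_v f(v) - f(v)∇_{v*} f(v*)) dv*`. -/
def Qcol (Λ γ : ℝ) (f : V3 → ℝ) (v : V3) : ℝ :=
  div3 (fun w i =>
    ∫ w₁ : V3, ∑ j, Aker Λ γ (w - w₁) i j * (f w₁ * pd j f w - f w * pd j f w₁)) v

/-- G_{st}(γ,p,q) = ∫ |g|^γ g_s g_t H^p(g) H^q(g) M(g) dg. -/
def Gst (γ : ℝ) (s t : Fin 3) (p q : Fin 3 → ℕ) : ℝ :=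
  ∫ g : V3, nrm g ^ γ * g s * g t * Herm p g * Herm q g * Mxw g

/-- Generalized binomial coefficient C(x,k) = x(x-1)⋯(x-k+1)/k!. -/
def genBinom (x : ℝ) (k : ℕ) : ℝ := (∏ j ∈ Finset.range k, (x - j)) / k.factorial

/-- Scalar coefficient a_{pq}^{λκ}, zero unless p+q = λ+κ. -/
def aCoe (p q lam kap : ℕ) : ℝ :=
  if p + q = lam + kap then
    (2 : ℝ) ^ (-(((p : ℝ) + q) / 2)) * lam.factorial * kap.factorial *
      ∑ s ∈ Finset.Icc (p - kap) (min p lam),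
        (-1 : ℝ) ^ ((q : ℤ) - lam + s) /
          ((s.factorial * (lam - s).factorial * (p - s).factorial *
            ((q : ℤ) - lam + s).toNat.factorial : ℕ) : ℝ)
  else 0

/-- Multi-index coefficient a_{p,q}^{λ,κ} = ∏ᵢ a_{pᵢqᵢ}^{λᵢκᵢ}. -/
def aMulti (p q lam kap : Fin 3 → ℕ) : ℝ := ∏ i, aCoe (p i) (q i) (lam i) (kap i)

/-- B_p^q(γ,s,t) = -G_{st}(γ,p,q) + δ_{st} Σ_r G_{rr}(γ,p,q). -/
def Bcoe (γ : ℝ) (s t : Fin 3) (p q : Fin 3 → ℕ) : ℝ :=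
  -Gst γ s t p q + (if s = t then (1 : ℝ) else 0) * ∑ r, Gst γ r r p q

/-- The expansion coefficient A_α^{λ,κ} of the FPL collision operator. -/
def coeA (Λ γ : ℝ) (α lam kap : Fin 3 → ℕ) : ℝ :=
  (1 / (multiFact α : ℝ)) *
    ∫ v : V3, Herm α v *
      div3 (fun w i =>
        ∫ w₁ : V3, ∑ j, Aker Λ γ (w - w₁) i j *
          (Herm lam w₁ * Mxw w₁ * pd j (fun u => Herm kap u * Mxw u) w -
            Herm lam w * Mxw w * pd j (fun u => Herm kap u * Mxw u) w₁)) v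

/-- Multi-indices p with |p| < n, i.e. 0 ≤ |p| ≤ n-1. -/
def idxLt (n : ℕ) : Finset (Fin 3 → ℕ) :=
  (Fintype.piFinset (fun _ : Fin 3 => Finset.range n)).filter (fun p => degIdx p < n)

/-- Pairs of multi-indices (p,q) with p + q = σ. -/
def idxPairs (σ : Fin 3 → ℕ) : Finset ((Fin 3 → ℕ) × (Fin 3 → ℕ)) :=
  ((Fintype.piFinset fun i => Finset.range (σ i + 1)) ×ˢ
      (Fintype.piFinset fun i => Finset.range (σ i + 1))).filter fun x => x.1 + x.2 = σ

/-- Multi-index permutation operator exchanging the i-th and j-th entries. -/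
def swapIdx (i j : Fin 3) (p : Fin 3 → ℕ) : Fin 3 → ℕ := p ∘ Equiv.swap i j

/-- Associated Legendre function
`P_l^m(x) = ((-1)^m/(2^l l!)) (1-x²)^{m/2} d^{l+m}/dx^{l+m} (x²-1)^l`. -/
def assocLegendre (l : ℕ) (m : ℤ) (x : ℝ) : ℝ :=
  ((-1 : ℝ) ^ m * (1 - x ^ 2) ^ ((m : ℝ) / 2) / (2 ^ l * l.factorial)) *
    iteratedDeriv ((l : ℤ) + m).toNat (fun y => (y ^ 2 - 1) ^ l) x

/-- Spherical harmonic Y_l^m(n), written in terms of cos θ = n₃ and φ = arg(n₁ + i n₂). -/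
def sphHarm (l : ℕ) (m : ℤ) (n : V3) : ℂ :=
  ((Real.sqrt ((2 * l + 1) / (4 * π) * ((l : ℤ) - m).toNat.factorial /
      ((l : ℤ) + m).toNat.factorial) * assocLegendre l m (n 2) : ℝ) : ℂ) *
    Complex.exp (Complex.I * m * (Complex.arg ((n 0 : ℂ) + n 1 * Complex.I) : ℝ))

/-- Spherical harmonic with the convention Y_{l'}^{m'} = 0 when |m'| > l' or l' < 0. -/
def sphHarmZ (l m : ℤ) (n : V3) : ℂ :=
  if 0 ≤ l ∧ m.natAbs ≤ l.toNat then sphHarm l.toNat m n else 0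

/-- Surface integral over the unit sphere S² in spherical coordinates. -/
def sphereIntegral (F : V3 → ℂ) : ℂ :=
  ∫ θ in (0 : ℝ)..π, ∫ φ in (0 : ℝ)..(2 * π),
    F ![Real.sin θ * Real.cos φ, Real.sin θ * Real.sin φ, Real.cos θ] * (Real.sin θ : ℂ)

/-- Laguerre polynomial L_n^{(β)}(x) = (x^{-β} eˣ / n!) dⁿ/dxⁿ [x^{n+β} e^{-x}]. -/
def laguerre (n : ℕ) (β : ℝ) (x : ℝ) : ℝ :=
  (x ^ (-β) * Real.exp x / n.factorial) *
    iteratedDeriv n (fun y => y ^ ((n : ℝ) + β) * Real.exp (-y)) x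

/-- Normalized Burnett polynomial B_{α̂}(v) with α̂ = (l, m, nn). -/
def Burnett (l : ℕ) (m : ℤ) (nn : ℕ) (v : V3) : ℂ :=
  ((Real.sqrt ((2 : ℝ) ^ (1 - (l : ℝ)) * π ^ ((3 : ℝ) / 2) * nn.factorial /
        Real.Gamma (nn + l + 3 / 2)) *
      laguerre nn ((l : ℝ) + 1 / 2) (nrm v ^ 2 / 2) * nrm v ^ l : ℝ) : ℂ) *
    sphHarm l m (fun i => v i / nrm v)

/-- Connection coefficient C_{α̂}^α = ∫ B_{α̂}(v) H^α(v) M(v) dv. -/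
def coeC (l : ℕ) (m : ℤ) (nn : ℕ) (α : Fin 3 → ℕ) : ℂ :=
  ∫ v : V3, Burnett l m nn v * ((Herm α v * Mxw v : ℝ) : ℂ)

/-- Burnett indices α̂ = (α̂₁,α̂₂,α̂₃), α̂₂ ∈ {-α̂₁,…,α̂₁}, with |α̂|_B = α̂₁ + 2α̂₃ = N. -/
def burnettIdx (N : ℕ) : Finset (ℕ × ℤ × ℕ) :=
  ((Finset.range (N + 1)) ×ˢ (Finset.Icc (-(N : ℤ)) N) ×ˢ (Finset.range (N + 1))).filter
    fun x => x.1 + 2 * x.2.2 = N ∧ x.2.1.natAbs ≤ x.1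

/-- D_{n₁n₂}^{l₁l₂} = √(n₁!n₂!/(Γ(n₁+l₁+3/2)Γ(n₂+l₂+3/2))). -/
def Dcoe (n1 n2 l1 l2 : ℕ) : ℝ :=
  Real.sqrt ((n1.factorial * n2.factorial : ℝ) /
    (Real.Gamma (n1 + l1 + 3 / 2) * Real.Gamma (n2 + l2 + 3 / 2)))

/-- K(μ,α,κ,m,n) = (-1)^{m+n} Γ(μ+1) Σᵢ C(μ-α,m-i) C(μ-κ,n-i) C(i+μ,i). -/
def Kcoe (μ a k : ℝ) (m n : ℕ) : ℝ :=
  (-1 : ℝ) ^ (m + n) * Real.Gamma (μ + 1) *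
    ∑ i ∈ Finset.range (min m n + 1),
      genBinom (μ - a) (m - i) * genBinom (μ - k) (n - i) * genBinom ((i : ℝ) + μ) i

/-- F_{st}(l₁,m₁,l₂,m₂) = ∫_{S²} n_s n_t Y_{l₁}^{m₁}(n) Y_{l₂}^{m₂}(n) dn. -/
def Fst (s t : Fin 3) (l1 : ℕ) (m1 : ℤ) (l2 : ℕ) (m2 : ℤ) : ℂ :=
  sphereIntegral fun n => ((n s * n t : ℝ) : ℂ) * sphHarm l1 m1 n * sphHarm l2 m2 n

/-- Kronecker delta on ℤ. -/
def kdZ (a b : ℤ) : ℝ := if a = b then 1 else 0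

/-- η_{lm}^μ as in the paper (l, m, μ integers, μ ∈ {-1,0,1}). -/
def eta (l m μ : ℤ) : ℝ :=
  Real.sqrt ((((l : ℝ) + (2 * kdZ 1 μ - 1) * m + kdZ 1 μ) *
      ((l : ℝ) - (2 * kdZ (-1) μ - 1) * m + kdZ (-1) μ)) /
    ((2 : ℝ) ^ μ.natAbs * (2 * l - 1) * (2 * l + 1)))

/-- General Maxwellian M_{ρ,u,θ}. -/
def Mgen (ρ θ : ℝ) (u : V3) (v : V3) : ℝ :=
  ρ / (2 * π * θ) ^ ((3 : ℝ) / 2) * Real.exp (-(nrm (v - u) ^ 2) / (2 * θ))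

/-- Hermite coefficient f_α = (1/α!) ∫ H^α(v) f(v) dv. -/
def hermCoeff (f : V3 → ℝ) (α : Fin 3 → ℕ) : ℝ :=
  (1 / (multiFact α : ℝ)) * ∫ v : V3, Herm α v * f v

/-- τ(t) = 1 - 0.4 e^{-4t}. -/
def tau (t : ℝ) : ℝ := 1 - 0.4 * Real.exp (-4 * t)

/-- The BKW distribution. -/
def fBKW (t : ℝ) (v : V3) : ℝ :=
  (2 * π * tau t) ^ (-(3 : ℝ) / 2) * Real.exp (-(nrm v ^ 2) / (2 * tau t)) *
    (1 + (1 - tau t) / tau t * (nrm v ^ 2 / (2 * tau t) - 3 / 2))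

/-! With `He_n = (x - d/dx)ⁿ 1` the probabilists' Hermite polynomials, `H^α(v) = ∏ᵢ He_{αᵢ}(vᵢ)`,
so the formula reduces to one dimension. There, put `x = √2 h` and `y = g/√2`: then
`h ± g/2 = (x ± y)/√2` are the coordinates of `(x, y)` in a rotated frame, and the raising
operators `u - ∂_u` of the rotated coordinates are the same rotation of the commuting operators
`R_x = x - ∂_x` and `R_y = y - ∂_y`. Hence `He_a(h + g/2) He_k(h - g/2)` equals
`2^{-(a+k)/2} (R_x + R_y)^a (R_x - R_y)^k 1`, and the binomial expansion yields the coefficients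
`a_{pq}^{ak}` in front of `R_x^p R_y^q 1 = He_p(x) He_q(y)`. -/

open Polynomial
open MvPolynomial (pderiv pderiv_X)
open Finset.HasAntidiagonal (antidiagonal mem_antidiagonal)

section Raising

variable {R A : Type*} [CommRing R] [CommRing A] [Algebra R A]

def raisingOp (D : Derivation R A A) (u : A) : Module.End R A :=
  LinearMap.mulLeft R u - D.toLinearMap

@[simp]
lemma raisingOp_apply (D : Derivation R A A) (u f : A) : raisingOp D u f = u * f - D f := rfl

lemma smul_raisingOp_add_smul_raisingOp (D D' : Derivation R A A) (u u' : A) (c d : R) :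
    c • raisingOp D u + d • raisingOp D' u' = raisingOp (c • D + d • D') (c • u + d • u') := by
  ext f
  simp only [LinearMap.add_apply, LinearMap.smul_apply, raisingOp_apply, Derivation.add_apply,
    Derivation.smul_apply, smul_sub, add_mul, smul_mul_assoc]
  abel

lemma commute_raisingOp {D D' : Derivation R A A} {u u' : A} (hDu' : D u' = 0) (hD'u : D' u = 0)
    (hDD' : ⁅D, D'⁆ = 0) : Commute (raisingOp D u) (raisingOp D' u') := by
  ext f
  have h := congrArg (· f) hDD'
  simp only [Derivation.commutator_apply, Derivation.zero_apply] at h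
  simp only [Module.End.mul_apply, raisingOp_apply, map_sub, D.leibniz, D'.leibniz, hDu', hD'u,
    smul_eq_mul]
  linear_combination h

/- The `ℤ`-algebra structure is an instance argument so that the lemmas apply to `MvPolynomial σ R`,
whose `ℤ`-algebra instance is equal, but not reducibly, to `Ring.toIntAlgebra`. -/
lemma Derivation.map_aeval_int [Algebra ℤ A] (D : Derivation R A A) (P : ℤ[X]) (u : A) :
    D (aeval u P) = aeval u (derivative P) * D u := by
  obtain rfl : ‹Algebra ℤ A› = Ring.toIntAlgebra A := Subsingleton.elim _ _
  rw [← smul_eq_mul]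
  exact (D.restrictScalars ℤ).map_aeval P u

variable [Algebra ℤ A] {D : Derivation R A A} {u : A}

lemma raisingOp_aeval_hermite_mul (hu : D u = 1) {f : A} (hf : D f = 0) (n : ℕ) :
    raisingOp D u (aeval u (hermite n) * f) = aeval u (hermite (n + 1)) * f := by
  rw [raisingOp_apply, D.leibniz, D.map_aeval_int, hu, hf, hermite_succ]
  simp only [map_sub, map_mul, aeval_X, smul_eq_mul]
  ring

lemma raisingOp_pow_apply (hu : D u = 1) {f : A} (hf : D f = 0) (n : ℕ) :
    (raisingOp D u ^ n) f = aeval u (hermite n) * f := by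
  induction n with
  | zero => simp [hermite_zero]
  | succ n ih => rw [pow_succ', Module.End.mul_apply, ih, raisingOp_aeval_hermite_mul hu hf]

end Raising

lemma Commute.smul_add_smul_pow_mul_smul_add_smul_pow {R B : Type*} [CommRing R] [Ring B]
    [Algebra R B] {x y : B} (h : Commute x y) (c s c' s' : R) (a k : ℕ) :
    (c • x + s • y) ^ a * (c' • x + s' • y) ^ k =
      ∑ i ∈ Finset.range (a + 1), ∑ j ∈ Finset.range (k + 1),
        ((a.choose i * k.choose j : ℕ) * c ^ i * s ^ (a - i) * c' ^ j * s' ^ (k - j) : R) •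
          (x ^ (i + j) * y ^ (a - i + (k - j))) := by
  rw [((h.smul_left c).smul_right s).add_pow, ((h.smul_left c').smul_right s').add_pow,
    Finset.sum_mul_sum]
  refine Finset.sum_congr rfl fun i _ => Finset.sum_congr rfl fun j _ => ?_
  rw [← nsmul_one (a.choose i), ← nsmul_one (k.choose j), ← Nat.cast_smul_eq_nsmul R,
    ← Nat.cast_smul_eq_nsmul R]
  simp only [_root_.smul_pow, smul_mul_assoc, mul_smul_comm, smul_smul, mul_one]
  rw [(h.symm.pow_pow _ _).mul_mul_mul_comm, ← pow_add, ← pow_add]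
  congr 1
  push_cast
  ring

section CoordRaising

variable (R : Type*) [CommRing R] {σ : Type*} [DecidableEq σ]

def coordRaisingOp (i : σ) : Module.End R (MvPolynomial σ R) :=
  raisingOp (pderiv i) (MvPolynomial.X i)

lemma commutator_pderiv_pderiv (i j : σ) : ⁅pderiv (R := R) i, pderiv (R := R) j⁆ = 0 :=
  MvPolynomial.derivation_ext fun k => by
    simp [Derivation.commutator_apply, pderiv_X, Pi.single_apply, apply_ite]

variable {R}

lemma commute_coordRaisingOp {i j : σ} (hij : i ≠ j) :
    Commute (coordRaisingOp R i) (coordRaisingOp R j) :=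
  commute_raisingOp (by simp [pderiv_X, hij]) (by simp [pderiv_X, hij.symm])
    (commutator_pderiv_pderiv R i j)

lemma coordRaisingOp_pow_mul_pow_apply_one {i j : σ} (hij : i ≠ j) (p q : ℕ) :
    (coordRaisingOp R i ^ p * coordRaisingOp R j ^ q) 1 =
      aeval (MvPolynomial.X i) (hermite p) * aeval (MvPolynomial.X j) (hermite q) := by
  have hXj : pderiv i (aeval (MvPolynomial.X j) (hermite q) * 1 : MvPolynomial σ R) = 0 := by
    rw [mul_one, Derivation.map_aeval_int, pderiv_X, Pi.single_eq_of_ne hij.symm, mul_zero]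
  rw [Module.End.mul_apply]
  simp only [coordRaisingOp]
  rw [raisingOp_pow_apply (by simp [pderiv_X]) (Derivation.map_one_eq_zero _),
    raisingOp_pow_apply (by simp [pderiv_X]) hXj, mul_one]

lemma rotated_coordRaisingOp_pow_mul_pow_apply_one {c s : R} (hcs : c ^ 2 + s ^ 2 = 1) (a k : ℕ) :
    ((c • coordRaisingOp R 0 + s • coordRaisingOp R 1) ^ a *
        (s • coordRaisingOp R 0 + (-c) • coordRaisingOp R 1) ^ k :
          Module.End R (MvPolynomial (Fin 2) R)) 1 =
      aeval (c • MvPolynomial.X 0 + s • MvPolynomial.X 1 : MvPolynomial (Fin 2) R) (hermite a) *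
        aeval (s • MvPolynomial.X 0 + (-c) • MvPolynomial.X 1 : MvPolynomial (Fin 2) R)
          (hermite k) := by
  set u : MvPolynomial (Fin 2) R := c • MvPolynomial.X 0 + s • MvPolynomial.X 1
  set w : MvPolynomial (Fin 2) R := s • MvPolynomial.X 0 + (-c) • MvPolynomial.X 1
  set Du : Derivation R (MvPolynomial (Fin 2) R) _ := c • pderiv 0 + s • pderiv 1
  set Dw : Derivation R (MvPolynomial (Fin 2) R) _ := s • pderiv 0 + (-c) • pderiv 1
  have hDu : Du u = 1 := by simp [Du, u, pderiv_X, smul_smul, ← add_smul, ← sq, hcs]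
  have hDw : Dw w = 1 := by
    simp [Dw, w, pderiv_X, smul_smul, ← add_smul, ← sq, add_comm (s ^ 2), hcs]
  have hDuw : Du (aeval w (hermite k) * 1) = 0 := by
    rw [mul_one, Derivation.map_aeval_int]
    simp [Du, w, pderiv_X, smul_smul, mul_comm c s]
  simp only [coordRaisingOp]
  rw [smul_raisingOp_add_smul_raisingOp, smul_raisingOp_add_smul_raisingOp, Module.End.mul_apply,
    raisingOp_pow_apply hDw (Derivation.map_one_eq_zero _), raisingOp_pow_apply hDu hDuw, mul_one]

end CoordRaising

lemma aeval_hermite_mul_aeval_hermite_rotation {R : Type*} [CommRing R] {c s : R}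
    (hcs : c ^ 2 + s ^ 2 = 1) (x y : R) (a k : ℕ) :
    aeval (c * x + s * y) (hermite a) * aeval (s * x - c * y) (hermite k) =
      ∑ i ∈ Finset.range (a + 1), ∑ j ∈ Finset.range (k + 1),
        ((a.choose i * k.choose j : ℕ) * c ^ i * s ^ (a - i) * s ^ j * (-c) ^ (k - j)) *
          (aeval x (hermite (i + j)) * aeval y (hermite (a - i + (k - j)))) := by
  have hev (P : ℤ[X]) (f : MvPolynomial (Fin 2) R) :
      MvPolynomial.aeval ![x, y] (aeval f P) = aeval (MvPolynomial.aeval ![x, y] f) P :=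
    (aeval_algHom_apply ((MvPolynomial.aeval ![x, y]).restrictScalars ℤ) f P).symm
  have h := congrArg (MvPolynomial.aeval ![x, y])
    (rotated_coordRaisingOp_pow_mul_pow_apply_one hcs a k)
  rw [(commute_coordRaisingOp zero_ne_one).smul_add_smul_pow_mul_smul_add_smul_pow] at h
  simp only [LinearMap.sum_apply, LinearMap.smul_apply, map_sum, map_smul,
    coordRaisingOp_pow_mul_pow_apply_one zero_ne_one, map_mul, hev, map_add, MvPolynomial.aeval_X,
    Matrix.cons_val_zero, Matrix.cons_val_one, Matrix.cons_val_fin_one, smul_eq_mul, neg_mul,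
    ← sub_eq_add_neg] at h
  exact h.symm

lemma iteratedDeriv_gaussian (n : ℕ) (t : ℝ) :
    iteratedDeriv n (fun x => exp (-(x ^ 2 / 2))) t =
      (-1) ^ n * aeval t (hermite n) * exp (-(t ^ 2 / 2)) := by
  rw [iteratedDeriv_eq_iterate, deriv_gaussian_eq_hermite_mul_gaussian]

lemma Mxw_eq_mul_prod (v : V3) :
    Mxw v = (2 * π) ^ (-(3 : ℝ) / 2) * ∏ i, exp (-(v i ^ 2 / 2)) := by
  rw [Mxw, Fin.prod_univ_three, Fin.sum_univ_three, ← exp_add, ← exp_add]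
  ring_nf

lemma Herm_eq_prod (α : Fin 3 → ℕ) (v : V3) : Herm α v = ∏ i, aeval (v i) (hermite (α i)) := by
  simp only [Herm, Mxw_eq_mul_prod, Fin.prod_univ_three, Matrix.cons_val_zero, Matrix.cons_val_one,
    Matrix.cons_val_two, Matrix.head_cons, Matrix.tail_cons, iteratedDeriv_const_mul_field,
    iteratedDeriv_mul_const_field, iteratedDeriv_gaussian]
  rw [degIdx, pow_add, pow_add]
  field_simp
  ring_nf
  simp

lemma aCoe_eq_sum {p q a k : ℕ} (h : p + q = a + k) :
    aCoe p q a k = (√2)⁻¹ ^ (a + k) *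
      ∑ i ∈ Finset.Icc (p - k) (min p a),
        (-1) ^ (k - (p - i)) * (a.choose i * k.choose (p - i) : ℝ) := by
  have h2 : (2 : ℝ) ^ (-(((p : ℝ) + q) / 2)) = (√2)⁻¹ ^ (a + k) := by
    rw [sqrt_eq_rpow, ← rpow_neg zero_le_two, ← rpow_natCast, ← rpow_mul zero_le_two]
    congr 1
    rw [← Nat.cast_add, h]
    push_cast
    ring
  rw [aCoe, if_pos h, h2, mul_assoc, mul_assoc]
  congr 1
  rw [Finset.mul_sum, Finset.mul_sum]
  refine Finset.sum_congr rfl fun i hi => ?_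
  rw [Finset.mem_Icc] at hi
  obtain ⟨j, rfl⟩ : ∃ j, p = i + j := ⟨p - i, by omega⟩
  rw [show (q : ℤ) - a + (i : ℕ) = ((k - j : ℕ) : ℤ) by omega, zpow_natCast, Int.toNat_natCast,
    Nat.add_sub_cancel_left, Nat.cast_choose ℝ (by omega : i ≤ a),
    Nat.cast_choose ℝ (by omega : j ≤ k)]
  push_cast
  field_simp

lemma sum_range_sum_range_eq_sum_antidiagonal {M : Type*} [AddCommMonoid M] (a k : ℕ)
    (F : ℕ → ℕ → M) :
    ∑ i ∈ Finset.range (a + 1), ∑ j ∈ Finset.range (k + 1), F i (i + j) =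
      ∑ pq ∈ antidiagonal (a + k), ∑ i ∈ Finset.Icc (pq.1 - k) (min pq.1 a), F i pq.1 := by
  rw [Finset.sum_sigma', Finset.sum_sigma']
  refine Finset.sum_bij' (fun x _ => ⟨(x.1 + x.2, a + k - (x.1 + x.2)), x.1⟩)
    (fun y _ => ⟨y.2, y.1.1 - y.2⟩) ?_ ?_ ?_ ?_ fun _ _ => rfl
  · intro x hx
    simp only [Finset.mem_sigma, Finset.mem_range] at hx
    simp only [Finset.mem_sigma, mem_antidiagonal, Finset.mem_Icc]
    omega
  · intro y hy
    simp only [Finset.mem_sigma, mem_antidiagonal, Finset.mem_Icc] at hy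
    simp only [Finset.mem_sigma, Finset.mem_range]
    omega
  · intro x _
    simp only [Nat.add_sub_cancel_left]
  · intro y hy
    simp only [Finset.mem_sigma, mem_antidiagonal, Finset.mem_Icc] at hy
    ext <;> simp only [heq_eq_eq] <;> omega

lemma aeval_hermite_add_mul_aeval_hermite_sub (h g : ℝ) (a k : ℕ) :
    aeval (h + 2⁻¹ * g) (hermite a) * aeval (h - 2⁻¹ * g) (hermite k) =
      ∑ pq ∈ antidiagonal (a + k),
        aCoe pq.1 pq.2 a k *
          (aeval (√2 * h) (hermite pq.1) * aeval ((√2)⁻¹ * g) (hermite pq.2)) := by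
  set c : ℝ := (√2)⁻¹
  have hc : c ^ 2 = 2⁻¹ := by rw [inv_pow, sq_sqrt zero_le_two]
  have hc' : c * √2 = 1 := inv_mul_cancel₀ (by positivity)
  have hsum : c * (√2 * h) + c * (c * g) = h + 2⁻¹ * g := by linear_combination h * hc' + g * hc
  have hdiff : c * (√2 * h) - c * (c * g) = h - 2⁻¹ * g := by linear_combination h * hc' - g * hc
  let F (i p : ℕ) : ℝ :=
    c ^ (a + k) * ((-1) ^ (k - (p - i)) * (a.choose i * k.choose (p - i) : ℝ)) *
      (aeval (√2 * h) (hermite p) * aeval (c * g) (hermite (a + k - p)))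
  rw [← hsum, ← hdiff, aeval_hermite_mul_aeval_hermite_rotation (by rw [hc]; norm_num)]
  calc _ = ∑ i ∈ Finset.range (a + 1), ∑ j ∈ Finset.range (k + 1), F i (i + j) := by
        refine Finset.sum_congr rfl fun i hi => Finset.sum_congr rfl fun j hj => ?_
        rw [Finset.mem_range] at hi hj
        have hpow : c ^ (a + k) = c ^ i * c ^ (a - i) * c ^ j * c ^ (k - j) := by
          rw [← pow_add, ← pow_add, ← pow_add]; congr 1; omega
        dsimp only [F]
        rw [Nat.add_sub_cancel_left, show a - i + (k - j) = a + k - (i + j) by omega, hpow, neg_pow]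
        push_cast
        ring
    _ = ∑ pq ∈ antidiagonal (a + k), ∑ i ∈ Finset.Icc (pq.1 - k) (min pq.1 a), F i pq.1 :=
        sum_range_sum_range_eq_sum_antidiagonal a k F
    _ = _ := by
        refine Finset.sum_congr rfl fun pq hpq => ?_
        rw [mem_antidiagonal] at hpq
        rw [aCoe_eq_sum hpq, Finset.mul_sum, Finset.sum_mul, show pq.2 = a + k - pq.1 by omega]

lemma sum_idxPairs {M : Type*} [AddCommMonoid M] (σ : Fin 3 → ℕ)
    (F : (Fin 3 → ℕ) × (Fin 3 → ℕ) → M) :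
    ∑ x ∈ idxPairs σ, F x =
      ∑ f ∈ Fintype.piFinset fun i => antidiagonal (σ i),
        F (fun i => (f i).1, fun i => (f i).2) := by
  symm
  refine Finset.sum_nbij' (fun f => (fun i => (f i).1, fun i => (f i).2))
    (fun x i => (x.1 i, x.2 i)) ?_ ?_ (fun _ _ => rfl) (fun _ _ => rfl) (fun _ _ => rfl)
  · intro f hf
    simp only [Fintype.mem_piFinset, mem_antidiagonal] at hf
    simp only [idxPairs, Finset.mem_filter, Finset.mem_product, Fintype.mem_piFinset,
      Finset.mem_range, funext_iff, Pi.add_apply]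
    refine ⟨⟨fun i => ?_, fun i => ?_⟩, hf⟩ <;> have := hf i <;> omega
  · intro x hx
    simp only [idxPairs, Finset.mem_filter, funext_iff, Pi.add_apply] at hx
    simp only [Fintype.mem_piFinset, mem_antidiagonal]
    exact hx.2

/-- product formula for Hermite polynomials under the change of
variables v = h + g/2, w = h - g/2. -/
theorem herm_product_formula (h g : V3) (α κ : Fin 3 → ℕ) :
    Herm α (h + (2 : ℝ)⁻¹ • g) * Herm κ (h - (2 : ℝ)⁻¹ • g) =
      ∑ x ∈ idxPairs (α + κ),
        aMulti x.1 x.2 α κ * Herm x.1 (Real.sqrt 2 • h) *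
          Herm x.2 ((Real.sqrt 2)⁻¹ • g) := by
  simp only [Herm_eq_prod, ← Finset.prod_mul_distrib, Pi.add_apply, Pi.sub_apply, Pi.smul_apply,
    smul_eq_mul, aeval_hermite_add_mul_aeval_hermite_sub, Finset.prod_univ_sum, sum_idxPairs]
  refine Finset.sum_congr rfl fun f _ => ?_
  simp only [aMulti, Finset.prod_mul_distrib, mul_assoc]
end
end

section
/- Let l, l₁, l₂ ≥ 0 be integers and m ∈ {−l,…,l}, m₁ ∈ {−l₁,…,l₁}, m₂ ∈ {−l₂,…,l₂}. If m ≠ m₁ + m₂, or l ∉ [|l₁−l₂|, l₁+l₂], then ∫_{S²} Y_{l₁}^{m₁}(n) Y_{l₂}^{m₂}(n) conj(Y_{l}^{m}(n)) dn = 0. -/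
open MeasureTheory Real
open scoped BigOperators Classical

noncomputable section

/-!
In spherical coordinates each factor separates as `Y_l^m = N_l^m P_l^m(cos θ) e^{imφ}`, so the
integral is a product of a θ-integral and `∫₀^{2π} e^{i(m₁+m₂-m)φ} dφ`, which vanishes unless
`m = m₁ + m₂`. In that case let `l₃` be the largest of the three degrees, say `l₃ > l₁ + l₂`
(the triangle condition fails). On `(-1, 1)` the product of the three associated Legendre
functions is `f(x) · d^{l₃+m₃}/dx^{l₃+m₃} (x² - 1)^{l₃}` with `f` a polynomial: the half-integer
powers of `1 - x²` combine to an integer power `w = (|m₁| + |m₂| + m₃)/2`, so `(x² - 1)^w ∣ f`,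
and `deg f ≤ l₁ + l₂ + m₃ < l₃ + m₃`. Integrating by parts `l₃ + m₃` times moves all
derivatives onto `f`, which they annihilate; every boundary term vanishes at `±1` because of the
factor `(x² - 1)^w` on one side or `(x² - 1)^{l₃}` on the other.
-/

open Polynomial Set

namespace Polynomial

theorem intervalIntegral_eval_mul_iterate_derivative_eq_zero {u f g : ℝ[X]} {a b : ℝ}
    (ha : u.IsRoot a) (hb : u.IsRoot b) {k l n : ℕ} (hf : u ^ k ∣ f) (hg : u ^ l ∣ g)
    (hn : n ≤ k + l) (hfn : derivative^[n] f = 0) :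
    ∫ x in a..b, f.eval x * (derivative^[n] g).eval x = 0 := by
  induction n generalizing f k with
  | zero => simp_all
  | succ n ih =>
    have boundary : ∀ c, u.IsRoot c → f.eval c * (derivative^[n] g).eval c = 0 := by
      intro c hc
      rcases Nat.eq_zero_or_pos k with rfl | hk
      · have hu : u ∣ derivative^[n] g := (dvd_pow_self u (by omega : l - n ≠ 0)).trans
          (pow_sub_dvd_iterate_derivative_of_pow_dvd n hg)
        rw [eval_eq_zero_of_dvd_of_eval_eq_zero hu hc, mul_zero]
      · rw [eval_eq_zero_of_dvd_of_eval_eq_zero ((dvd_pow_self u hk.ne').trans hf) hc, zero_mul]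
    rw [intervalIntegral.integral_mul_deriv_eq_deriv_mul (fun x _ => f.hasDerivAt x)
        (fun x _ => by simpa only [Function.iterate_succ_apply'] using
          (derivative^[n] g).hasDerivAt x)
        (f.derivative.continuous.intervalIntegrable _ _)
        ((derivative^[n + 1] g).continuous.intervalIntegrable _ _),
      boundary a ha, boundary b hb,
      ih (pow_sub_one_dvd_derivative_of_pow_dvd hf) (by omega)
        (by rwa [← Function.iterate_succ_apply])]
    ring

theorem iteratedDeriv_eval (p : ℝ[X]) (n : ℕ) :
    iteratedDeriv n (fun x => p.eval x) = fun x => (derivative^[n] p).eval x := by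
  induction n with
  | zero => simp
  | succ n ih =>
    ext x
    rw [iteratedDeriv_succ, ih, Polynomial.deriv, Function.iterate_succ_apply']

end Polynomial

theorem natDegree_X_sq_sub_one : ((X : ℝ[X]) ^ 2 - 1).natDegree = 2 := by
  rw [← C_1, natDegree_X_pow_sub_C]

theorem assocLegendre_eq_eval (l : ℕ) (m : ℤ) (x : ℝ) :
    assocLegendre l m x = (-1 : ℝ) ^ m * (1 - x ^ 2) ^ ((m : ℝ) / 2) / (2 ^ l * l.factorial) *
      (derivative^[((l : ℤ) + m).toNat] ((X ^ 2 - 1) ^ l)).eval x := by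
  have hpoly : (fun y : ℝ => (y ^ 2 - 1) ^ l) = fun y => ((X ^ 2 - 1) ^ l : ℝ[X]).eval y := by
    simp
  rw [assocLegendre, hpoly, iteratedDeriv_eval]

theorem exists_iterate_derivative_X_sq_sub_one_pow_eq_mul (l : ℕ) (m : ℤ) (h : m.natAbs ≤ l) :
    ∃ q : ℝ[X], derivative^[((l : ℤ) + m).toNat] ((X ^ 2 - 1) ^ l) =
      (X ^ 2 - 1) ^ (-m).toNat * q ∧ q.natDegree ≤ l - m.natAbs := by
  obtain ⟨q, hq⟩ := pow_sub_dvd_iterate_derivative_pow ((X : ℝ[X]) ^ 2 - 1) l ((l : ℤ) + m).toNat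
  rw [show l - ((l : ℤ) + m).toNat = (-m).toNat by omega] at hq
  refine ⟨q, hq, ?_⟩
  rcases eq_or_ne q 0 with rfl | hq0
  · simp
  have hdeg := natDegree_iterate_derivative (((X : ℝ[X]) ^ 2 - 1) ^ l) ((l : ℤ) + m).toNat
  have hX : ((X : ℝ[X]) ^ 2 - 1) ≠ 0 := fun h => by simpa [h] using natDegree_X_sq_sub_one
  rw [hq, natDegree_mul (pow_ne_zero _ hX) hq0, natDegree_pow, natDegree_pow,
    natDegree_X_sq_sub_one] at hdeg
  omega

theorem exists_assocLegendre_eq_mul_eval (l : ℕ) (m : ℤ) (h : m.natAbs ≤ l) :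
    ∃ p : ℝ[X], p.natDegree ≤ l - m.natAbs ∧ ∀ x ∈ Ioo (-1 : ℝ) 1,
      assocLegendre l m x = (1 - x ^ 2) ^ ((m.natAbs : ℝ) / 2) * p.eval x := by
  obtain ⟨q, hq, hdeg⟩ := exists_iterate_derivative_X_sq_sub_one_pow_eq_mul l m h
  set k := (-m).toNat
  refine ⟨C ((-1 : ℝ) ^ m * (-1) ^ k / (2 ^ l * l.factorial)) * q,
    (natDegree_C_mul_le _ _).trans hdeg, fun x hx => ?_⟩
  have hx2 : 0 < 1 - x ^ 2 := by nlinarith [hx.1, hx.2]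
  have hk : (m.natAbs : ℝ) / 2 = (m : ℝ) / 2 + k := by
    have : (m.natAbs : ℤ) = m + 2 * k := by omega
    rw [← Int.cast_natCast, this]
    push_cast
    ring
  rw [assocLegendre_eq_eval, hq, hk, Real.rpow_add hx2, Real.rpow_natCast]
  simp only [eval_mul, eval_pow, eval_sub, eval_X, eval_one, eval_C]
  rw [show x ^ 2 - 1 = -1 * (1 - x ^ 2) by ring, mul_pow]
  ring

theorem integral_sin_mul_comp_cos {g : ℝ → ℝ} (hg : Continuous g) :
    ∫ θ in (0 : ℝ)..π, sin θ * g (cos θ) = ∫ x in (-1 : ℝ)..1, g x := by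
  have h := intervalIntegral.integral_comp_mul_deriv (a := 0) (b := π)
    (fun θ _ => hasDerivAt_cos θ) continuous_sin.neg.continuousOn hg
  rw [cos_zero, cos_pi, intervalIntegral.integral_symm (-1) 1] at h
  simp only [Function.comp_apply, mul_neg, intervalIntegral.integral_neg, neg_inj] at h
  simp only [← h, mul_comm]

theorem integral_sin_mul_comp_cos_of_eqOn {F G : ℝ → ℝ} (hG : Continuous G)
    (h : EqOn F G (Ioo (-1) 1)) :
    ∫ θ in (0 : ℝ)..π, sin θ * F (cos θ) = ∫ x in (-1 : ℝ)..1, G x := by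
  rw [← integral_sin_mul_comp_cos hG]
  congr 1
  ext θ
  rcases eq_or_ne (sin θ) 0 with hs | hs
  · simp [hs]
  · have : cos θ ^ 2 < 1 := by nlinarith [sin_sq_add_cos_sq θ, sq_pos_of_ne_zero hs]
    rw [h ⟨by nlinarith, by nlinarith⟩]

theorem exists_eqOn_assocLegendre_mul_mul {l1 l2 l3 w : ℕ} {m1 m2 m3 : ℤ}
    (h1 : m1.natAbs ≤ l1) (h2 : m2.natAbs ≤ l2)
    (hw : (m1.natAbs : ℤ) + m2.natAbs + m3 = 2 * w) :
    ∃ f : ℝ[X], (X ^ 2 - 1) ^ w ∣ f ∧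
      f.natDegree ≤ 2 * w + (l1 - m1.natAbs) + (l2 - m2.natAbs) ∧
      EqOn (fun x => assocLegendre l1 m1 x * assocLegendre l2 m2 x * assocLegendre l3 m3 x)
        (fun x => f.eval x * (derivative^[((l3 : ℤ) + m3).toNat] ((X ^ 2 - 1) ^ l3)).eval x)
        (Ioo (-1) 1) := by
  obtain ⟨p1, hdeg1, hp1⟩ := exists_assocLegendre_eq_mul_eval l1 m1 h1
  obtain ⟨p2, hdeg2, hp2⟩ := exists_assocLegendre_eq_mul_eval l2 m2 h2
  set c : ℝ := (-1) ^ m3 / (2 ^ l3 * l3.factorial)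
  refine ⟨(1 - X ^ 2) ^ w * (C c * p1 * p2), (pow_dvd_pow_of_dvd ⟨-1, by ring⟩ w).mul_right _,
    ?_, fun x hx => ?_⟩
  · have hX : ((1 : ℝ[X]) - X ^ 2).natDegree ≤ 2 := by compute_degree
    have hpow := natDegree_pow_le_of_le w hX
    have hC := natDegree_C_mul_le c p1
    have h12 := natDegree_mul_le (p := C c * p1) (q := p2)
    have hf := natDegree_mul_le (p := ((1 : ℝ[X]) - X ^ 2) ^ w) (q := C c * p1 * p2)
    omega
  · have hx2 : 0 < 1 - x ^ 2 := by nlinarith [hx.1, hx.2]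
    have hpow : (1 - x ^ 2) ^ ((m1.natAbs : ℝ) / 2) * (1 - x ^ 2) ^ ((m2.natAbs : ℝ) / 2) *
        (1 - x ^ 2) ^ ((m3 : ℝ) / 2) = (1 - x ^ 2) ^ w := by
      have hw' := congrArg (Int.cast : ℤ → ℝ) hw
      simp only [Int.cast_add, Int.cast_mul, Int.cast_natCast, Int.cast_ofNat] at hw'
      rw [← Real.rpow_add hx2, ← Real.rpow_add hx2, ← Real.rpow_natCast (1 - x ^ 2) w]
      congr 1
      linarith
    simp only [hp1 x hx, hp2 x hx, assocLegendre_eq_eval, c, eval_mul, eval_pow, eval_sub,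
      eval_X, eval_one, eval_C, ← hpow]
    ring

theorem integral_sin_mul_assocLegendre_mul_mul_eq_zero {l1 l2 l3 : ℕ} {m1 m2 m3 : ℤ}
    (h1 : m1.natAbs ≤ l1) (h2 : m2.natAbs ≤ l2)
    (hm : m3.natAbs ≤ m1.natAbs + m2.natAbs) (hpar : Even (m1 + m2 + m3)) (hl : l1 + l2 < l3) :
    ∫ θ in (0 : ℝ)..π, sin θ * (assocLegendre l1 m1 (cos θ) * assocLegendre l2 m2 (cos θ) *
      assocLegendre l3 m3 (cos θ)) = 0 := by
  obtain ⟨w, hw⟩ : ∃ w : ℕ, (m1.natAbs : ℤ) + m2.natAbs + m3 = 2 * w := by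
    obtain ⟨r, hr⟩ := hpar
    exact ⟨((m1.natAbs : ℤ) + m2.natAbs + m3).toNat / 2, by omega⟩
  obtain ⟨f, hdvd, hdeg, hf⟩ := exists_eqOn_assocLegendre_mul_mul (l3 := l3) h1 h2 hw
  refine (integral_sin_mul_comp_cos_of_eqOn (by fun_prop) hf).trans ?_
  exact intervalIntegral_eval_mul_iterate_derivative_eq_zero (u := X ^ 2 - 1) (by simp) (by simp)
    hdvd dvd_rfl (by omega) (iterate_derivative_eq_zero (by omega))

theorem integral_exp_int_mul_mul_I_eq_zero {K : ℤ} (hK : K ≠ 0) :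
    ∫ φ in (0 : ℝ)..2 * π, Complex.exp (K * φ * Complex.I) = 0 := by
  have hc : (K * Complex.I : ℂ) ≠ 0 := mul_ne_zero (by exact_mod_cast hK) Complex.I_ne_zero
  simp_rw [mul_right_comm _ _ Complex.I]
  rw [integral_exp_mul_complex hc, Complex.ofReal_mul, Complex.ofReal_ofNat,
    show (K * Complex.I : ℂ) * (2 * π) = K * (2 * π * Complex.I) by ring,
    Complex.exp_int_mul_two_pi_mul_I]
  simp

theorem exp_int_mul_arg_polar {r : ℝ} (hr : 0 < r) (m : ℤ) (φ : ℝ) :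
    Complex.exp (Complex.I * m *
        (Complex.arg ((r * cos φ : ℝ) + (r * sin φ : ℝ) * Complex.I) : ℝ)) =
      Complex.exp (m * φ * Complex.I) := by
  have hpolar : ((r * cos φ : ℝ) + (r * sin φ : ℝ) * Complex.I : ℂ) =
      r * Complex.exp (φ * Complex.I) := by
    rw [Complex.exp_mul_I]
    push_cast
    ring
  have harg : Complex.exp (Complex.arg (Complex.exp (φ * Complex.I)) * Complex.I) =
      Complex.exp (φ * Complex.I) := by
    simpa [Complex.norm_exp_ofReal_mul_I] using
      Complex.norm_mul_exp_arg_mul_I (Complex.exp (φ * Complex.I))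
  rw [hpolar, Complex.arg_real_mul _ hr, mul_assoc, mul_comm Complex.I, mul_assoc,
    Complex.exp_int_mul, harg, ← Complex.exp_int_mul, mul_assoc]

def sphHarmNormalization (l : ℕ) (m : ℤ) : ℝ :=
  √((2 * l + 1) / (4 * π) * ((l : ℤ) - m).toNat.factorial / ((l : ℤ) + m).toNat.factorial)

theorem sphHarm_spherical (l : ℕ) (m : ℤ) {θ : ℝ} (hθ : 0 < sin θ) (φ : ℝ) :
    sphHarm l m ![sin θ * cos φ, sin θ * sin φ, cos θ] =
      (sphHarmNormalization l m * assocLegendre l m (cos θ) : ℝ) *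
        Complex.exp (m * φ * Complex.I) := by
  simp only [sphHarm, sphHarmNormalization, Matrix.cons_val_zero, Matrix.cons_val_one,
    Matrix.cons_val_two, Matrix.head_cons, Matrix.tail_cons]
  rw [exp_int_mul_arg_polar hθ]

theorem sphHarm_mul_sphHarm_mul_conj_sphHarm_spherical (l1 l2 l : ℕ) (m1 m2 m : ℤ) {θ : ℝ}
    (hθ : 0 < sin θ) (φ : ℝ) :
    sphHarm l1 m1 ![sin θ * cos φ, sin θ * sin φ, cos θ] *
        sphHarm l2 m2 ![sin θ * cos φ, sin θ * sin φ, cos θ] *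
        starRingEnd ℂ (sphHarm l m ![sin θ * cos φ, sin θ * sin φ, cos θ]) =
      (sphHarmNormalization l1 m1 * sphHarmNormalization l2 m2 * sphHarmNormalization l m *
          (assocLegendre l1 m1 (cos θ) * assocLegendre l2 m2 (cos θ) *
            assocLegendre l m (cos θ)) : ℝ) *
        Complex.exp ((m1 + m2 - m : ℤ) * φ * Complex.I) := by
  rw [sphHarm_spherical l1 m1 hθ, sphHarm_spherical l2 m2 hθ, sphHarm_spherical l m hθ, map_mul,
    Complex.conj_ofReal, ← Complex.exp_conj]
  have hexp : Complex.exp (m1 * φ * Complex.I) * Complex.exp (m2 * φ * Complex.I) *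
      Complex.exp (starRingEnd ℂ (m * φ * Complex.I)) =
      Complex.exp ((m1 + m2 - m : ℤ) * φ * Complex.I) := by
    rw [← Complex.exp_add, ← Complex.exp_add]
    congr 1
    simp only [map_mul, Complex.conj_I, map_intCast, Complex.conj_ofReal]
    push_cast
    ring
  rw [← hexp]
  push_cast
  ring

theorem sphereIntegral_sphHarm_mul_sphHarm_mul_conj (l1 l2 l : ℕ) (m1 m2 m : ℤ) :
    sphereIntegral (fun n => sphHarm l1 m1 n * sphHarm l2 m2 n * starRingEnd ℂ (sphHarm l m n)) =
      (sphHarmNormalization l1 m1 * sphHarmNormalization l2 m2 * sphHarmNormalization l m *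
          ∫ θ in (0 : ℝ)..π, sin θ * (assocLegendre l1 m1 (cos θ) *
            assocLegendre l2 m2 (cos θ) * assocLegendre l m (cos θ)) : ℝ) *
        ∫ φ in (0 : ℝ)..2 * π, Complex.exp ((m1 + m2 - m : ℤ) * φ * Complex.I) := by
  rw [sphereIntegral, ← intervalIntegral.integral_const_mul (𝕜 := ℝ),
    ← intervalIntegral.integral_ofReal,
    ← intervalIntegral.integral_mul_const]
  refine intervalIntegral.integral_congr fun θ hθ => ?_
  rw [uIcc_of_le pi_pos.le] at hθ
  rcases (sin_nonneg_of_nonneg_of_le_pi hθ.1 hθ.2).eq_or_lt with hs | hs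
  · simp [← hs]
  · simp only [sphHarm_mul_sphHarm_mul_conj_sphHarm_spherical _ _ _ _ _ _ hs]
    rw [← intervalIntegral.integral_const_mul]
    congr 1 with φ
    push_cast
    ring

theorem integral_sin_mul_assocLegendre_mul_mul_eq_zero_of_not_triangle {l1 l2 l : ℕ}
    {m1 m2 m : ℤ} (h1 : m1.natAbs ≤ l1) (h2 : m2.natAbs ≤ l2) (hm : m.natAbs ≤ l)
    (hsum : m = m1 + m2) (hl : (l : ℤ) < |(l1 : ℤ) - l2| ∨ l1 + l2 < l) :
    ∫ θ in (0 : ℝ)..π, sin θ * (assocLegendre l1 m1 (cos θ) * assocLegendre l2 m2 (cos θ) *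
      assocLegendre l m (cos θ)) = 0 := by
  rcases hl with hl | hl
  · rcases abs_cases ((l1 : ℤ) - l2) with ⟨habs, -⟩ | ⟨habs, -⟩ <;> rw [habs] at hl
    · convert integral_sin_mul_assocLegendre_mul_mul_eq_zero h2 hm (m3 := m1) (l3 := l1)
        (by omega) ⟨m, by omega⟩ (by omega) using 3 with θ
      ring
    · convert integral_sin_mul_assocLegendre_mul_mul_eq_zero h1 hm (m3 := m2) (l3 := l2)
        (by omega) ⟨m, by omega⟩ (by omega) using 3 with θ
      ring
  · exact integral_sin_mul_assocLegendre_mul_mul_eq_zero h1 h2 (by omega) ⟨m, by omega⟩ hl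

/-- vanishing of the triple spherical-harmonic integral when
m ≠ m₁ + m₂ or l ∉ [|l₁-l₂|, l₁+l₂]. -/
theorem triple_sphHarm_integral_eq_zero (l l1 l2 : ℕ) (m m1 m2 : ℤ)
    (hm : m.natAbs ≤ l) (h1 : m1.natAbs ≤ l1) (h2 : m2.natAbs ≤ l2)
    (hcond : m ≠ m1 + m2 ∨ (l : ℤ) < |(l1 : ℤ) - (l2 : ℤ)| ∨ l1 + l2 < l) :
    sphereIntegral
      (fun n => sphHarm l1 m1 n * sphHarm l2 m2 n * (starRingEnd ℂ) (sphHarm l m n)) = 0 := by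
  rw [sphereIntegral_sphHarm_mul_sphHarm_mul_conj]
  by_cases hsum : m = m1 + m2
  · rw [integral_sin_mul_assocLegendre_mul_mul_eq_zero_of_not_triangle h1 h2 hm hsum
      (hcond.resolve_left (not_not_intro hsum))]
    simp
  · rw [integral_exp_int_mul_mul_I_eq_zero (by omega), mul_zero]
end
end

section
/- Let τ(t) = 1 − 0.4 e^{−4t} and define the BKW distribution f(t,v) = (2πτ(t))^{−3/2} exp(−|v|²/(2τ(t))) [ 1 + ((1−τ(t))/τ(t)) ( |v|²/(2τ(t)) − 3/2 ) ] for t ≥ 0 and v ∈ ℝ³. Then f is an exact solution of the spatially homogeneous linear Fokker-Planck equation for D = 3: ∂f/∂t (t,v) = (D−1) ∇_v·( ∇_v f(t,v) + f(t,v) v ) for all t ≥ 0 and v ∈ ℝ³. -/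
open MeasureTheory Real
open scoped BigOperators Classical

noncomputable section

/-!
Write f(t, v) = G(τ(t), S) with S = |v|². For a radial function g(|v|²) the flux ∇f + f v is
(2g' + g)(|v|²) v, whose divergence in ℝ³ is 3(2g' + g) + 2S(2g'' + g'). For fixed τ the profile
G(τ, ·) is e^{-S/(2τ)} times an affine function of S, a family closed under d/dS, so both sides of
the equation are e^{-S/(2τ)} times explicit rational expressions in τ and S; they agree because
τ' = 4(1 - τ).
-/

section RadialCalculus

variable {ι : Type*} [Fintype ι]

theorem hasFDerivAt_sum_sq (v : ι → ℝ) :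
    HasFDerivAt (fun w : ι → ℝ => ∑ j, w j ^ 2)
      (∑ j, (2 * v j) • ContinuousLinearMap.proj (R := ℝ) (φ := fun _ : ι => ℝ) j) v := by
  refine HasFDerivAt.fun_sum fun j _ => ?_
  simpa using (hasFDerivAt_apply (𝕜 := ℝ) j v).pow 2

variable [DecidableEq ι] {g : ℝ → ℝ} {g' : ℝ} {v : ι → ℝ}

theorem fderiv_comp_sum_sq_apply_single (hg : HasDerivAt g g' (∑ j, v j ^ 2)) (i : ι) :
    fderiv ℝ (fun w => g (∑ j, w j ^ 2)) v (Pi.single i 1) = 2 * g' * v i := by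
  have h : HasFDerivAt (fun w => g (∑ j, w j ^ 2)) _ v :=
    hg.comp_hasFDerivAt v (hasFDerivAt_sum_sq v)
  rw [h.fderiv]
  simp only [smul_apply, sum_apply, ContinuousLinearMap.proj_apply, Pi.single_apply, smul_eq_mul,
    mul_ite, mul_one, mul_zero, Finset.sum_ite_eq', Finset.mem_univ, ↓reduceIte]
  ring

theorem fderiv_comp_sum_sq_mul_apply_single (hg : HasDerivAt g g' (∑ j, v j ^ 2)) (i : ι) :
    fderiv ℝ (fun w => g (∑ j, w j ^ 2) * w i) v (Pi.single i 1) =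
      g (∑ j, v j ^ 2) + 2 * g' * v i ^ 2 := by
  have h : HasFDerivAt (fun w => g (∑ j, w j ^ 2) * w i) _ v :=
    (hg.comp_hasFDerivAt v (hasFDerivAt_sum_sq v)).mul (hasFDerivAt_apply i v)
  rw [h.fderiv]
  simp only [Function.comp_apply, add_apply, smul_apply, sum_apply,
    ContinuousLinearMap.proj_apply, Pi.single_eq_same, smul_eq_mul, Pi.single_apply, mul_ite,
    mul_one, mul_zero, Finset.sum_ite_eq', Finset.mem_univ, ↓reduceIte]
  ring

theorem sum_fderiv_comp_sum_sq_mul_apply_single (hg : HasDerivAt g g' (∑ j, v j ^ 2)) :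
    ∑ i, fderiv ℝ (fun w => g (∑ j, w j ^ 2) * w i) v (Pi.single i 1) =
      Fintype.card ι * g (∑ j, v j ^ 2) + 2 * g' * ∑ j, v j ^ 2 := by
  simp only [fderiv_comp_sum_sq_mul_apply_single hg, Finset.sum_add_distrib, Finset.sum_const,
    Finset.card_univ, nsmul_eq_mul, Finset.mul_sum]

end RadialCalculus

theorem div3_fokkerPlanck_flux_radial {g : ℝ → ℝ} (hg : Differentiable ℝ g)
    (hg' : Differentiable ℝ (deriv g)) (v : V3) :
    div3 (fun w i => pd i (fun u => g (∑ j, u j ^ 2)) w + g (∑ j, w j ^ 2) * w i) v =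
      3 * (2 * deriv g (∑ j, v j ^ 2) + g (∑ j, v j ^ 2)) +
        2 * (2 * deriv (deriv g) (∑ j, v j ^ 2) + deriv g (∑ j, v j ^ 2)) * ∑ j, v j ^ 2 := by
  have hflux : (fun w i => pd i (fun u => g (∑ j, u j ^ 2)) w + g (∑ j, w j ^ 2) * w i) =
      fun (w : V3) i => (2 * deriv g (∑ j, w j ^ 2) + g (∑ j, w j ^ 2)) * w i := by
    funext w i
    rw [pd, fderiv_comp_sum_sq_apply_single (hg _).hasDerivAt]
    ring
  have hh : HasDerivAt (fun S => 2 * deriv g S + g S)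
      (2 * deriv (deriv g) (∑ j, v j ^ 2) + deriv g (∑ j, v j ^ 2)) (∑ j, v j ^ 2) :=
    ((hg' _).hasDerivAt.const_mul 2).add (hg _).hasDerivAt
  rw [hflux]
  simpa [div3, pd] using sum_fderiv_comp_sum_sq_mul_apply_single hh

def expAffine (k a b S : ℝ) : ℝ := exp (-(k * S)) * (a + b * S)

theorem hasDerivAt_expAffine (k a b S : ℝ) :
    HasDerivAt (expAffine k a b) (expAffine k (b - k * a) (-(k * b)) S) S := by
  refine (((hasDerivAt_id S).const_mul k).neg.exp.mul
    (((hasDerivAt_id S).const_mul b).const_add a)).congr_deriv ?_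
  simp only [expAffine, id, Pi.neg_apply]
  ring

theorem deriv_expAffine (k a b : ℝ) :
    deriv (expAffine k a b) = expAffine k (b - k * a) (-(k * b)) :=
  funext fun S => (hasDerivAt_expAffine k a b S).deriv

theorem differentiable_expAffine (k a b : ℝ) : Differentiable ℝ (expAffine k a b) :=
  fun S => (hasDerivAt_expAffine k a b S).differentiableAt

theorem tau_pos {t : ℝ} (ht : 0 ≤ t) : 0 < tau t := by
  have : exp (-4 * t) ≤ 1 := exp_le_one_iff.mpr (by linarith)
  unfold tau
  linarith

theorem hasDerivAt_tau (t : ℝ) : HasDerivAt tau (4 * (1 - tau t)) t := by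
  refine ((((hasDerivAt_id t).const_mul (-4)).exp.const_mul (0.4 : ℝ)).const_sub 1).congr_deriv ?_
  simp only [tau, id]
  ring

def bkwProfile (τ S : ℝ) : ℝ :=
  (2 * π * τ) ^ (-(3 : ℝ) / 2) * exp (-S / (2 * τ)) * (1 + (1 - τ) / τ * (S / (2 * τ) - 3 / 2))

theorem fBKW_eq_bkwProfile : fBKW = fun t v => bkwProfile (tau t) (∑ j, v j ^ 2) := by
  funext t v
  rw [fBKW, bkwProfile, nrm, sq_sqrt (by positivity)]

theorem bkwProfile_eq_expAffine (τ : ℝ) :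
    bkwProfile τ = fun S => (2 * π * τ) ^ (-(3 : ℝ) / 2) *
      expAffine (1 / (2 * τ)) (1 - 3 * (1 - τ) / (2 * τ)) ((1 - τ) / (2 * τ ^ 2)) S := by
  funext S
  rw [bkwProfile, expAffine, show -S / (2 * τ) = -(1 / (2 * τ) * S) by ring]
  ring

theorem differentiable_bkwProfile (τ : ℝ) : Differentiable ℝ (bkwProfile τ) := by
  rw [bkwProfile_eq_expAffine]
  exact (differentiable_expAffine _ _ _).const_mul _

theorem differentiable_deriv_bkwProfile (τ : ℝ) : Differentiable ℝ (deriv (bkwProfile τ)) := by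
  rw [bkwProfile_eq_expAffine, deriv_const_mul_field', deriv_expAffine]
  exact (differentiable_expAffine _ _ _).const_mul _

theorem hasDerivAt_bkwProfile_comp_tau {t : ℝ} (ht : 0 ≤ t) (S : ℝ) :
    HasDerivAt (fun s => bkwProfile (tau s) S)
      (2 * (3 * (2 * deriv (bkwProfile (tau t)) S + bkwProfile (tau t) S) +
        2 * (2 * deriv (deriv (bkwProfile (tau t))) S + deriv (bkwProfile (tau t)) S) * S)) t := by
  have hτ : 0 < tau t := tau_pos ht
  set τ := tau t
  have h2τ : 2 * τ ≠ 0 := by positivity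
  have h2πτ : 2 * π * τ ≠ 0 := by positivity
  have hC := ((hasDerivAt_id τ).const_mul (2 * π)).rpow_const (p := -(3 : ℝ) / 2) (Or.inl h2πτ)
  have hE := ((hasDerivAt_const τ (-S)).div ((hasDerivAt_id τ).const_mul 2) h2τ).exp
  have hP := ((((hasDerivAt_id τ).const_sub 1).div (hasDerivAt_id τ) hτ.ne').mul
    (((hasDerivAt_const τ S).div ((hasDerivAt_id τ).const_mul 2) h2τ).sub_const (3 / 2))).const_add
    1
  refine (((hC.mul hE).mul hP).comp t (hasDerivAt_tau t)).congr_deriv ?_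
  rw [bkwProfile_eq_expAffine, deriv_const_mul_field', deriv_expAffine, deriv_const_mul_field',
    deriv_expAffine]
  simp only [expAffine, id, Pi.div_apply, Pi.mul_apply,
    show -(1 / (2 * τ) * S) = -S / (2 * τ) by ring]
  rw [rpow_sub_one h2πτ]
  field_simp
  ring

/-- the BKW distribution solves the spatially homogeneous linear
Fokker-Planck equation ∂f/∂t = (D-1) ∇·(∇f + f v) with D = 3. -/
theorem bkw_solves_linear_FP :
    ∀ t : ℝ, 0 ≤ t → ∀ v : V3,
      deriv (fun s => fBKW s v) t =
        ((3 : ℝ) - 1) * div3 (fun w i => pd i (fBKW t) w + fBKW t w * w i) v := by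
  intro t ht v
  rw [fBKW_eq_bkwProfile,
    div3_fokkerPlanck_flux_radial (differentiable_bkwProfile _) (differentiable_deriv_bkwProfile _),
    (hasDerivAt_bkwProfile_comp_tau ht _).deriv]
  ring
end
end
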